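/- Triviality of the deficiency spaces on the half-line for |α| ≥ 1/2 (core of Proposition 3.4(ii)): Let α ∈ ℝ with |α| ≥ 1/2, let z = i or z = −i, and let f = (f₁, f₂) : (0,∞) → ℂ² be continuously differentiable with ∫₀^∞ |f(x)|²_{ℂ²} dx < ∞ and satisfying for all x > 0 the system f₂'(x) + (α/x) f₂(x) = z f₁(x) and −f₁'(x) + (α/x) f₁(x) = z f₂(x). Then f ≡ 0. -/

import Mathlib

open MeasureTheory Real Set Filter ComplexConjugate

noncomputable section

/-! For `z ∈ iℝ` the flux `Re (z f₁ f̄₂)` has derivative `‖z‖² (‖f₁‖² + ‖f₂‖²) ≥ 0`; being increasing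
and integrable at infinity, it is `≤ 0`. For `α ≥ 1/2` this makes `(x ‖f₂‖²)' = (1 - 2α) ‖f₂‖² + 2x · flux`
nonpositive, so `‖f₂(x)‖² ≥ c / x` near `0` with `c > 0` unless `f₂ ≡ 0`, contradicting square
integrability at `0`; the equation for `f₂'` then forces `f₁ ≡ 0`. The case `α ≤ -1/2` reduces to this one
by exchanging `f₁` and `f₂` and replacing `α, z` by `-α, -z`. -/

theorem MonotoneOn.nonpos_of_integrableOn_Ioi {g : ℝ → ℝ} {a : ℝ} (hg : MonotoneOn g (Ioi a))
    (hint : IntegrableOn g (Ioi a)) : ∀ x ∈ Ioi a, g x ≤ 0 := by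
  intro x hx
  by_contra! hpos
  have hsub : Ici x ⊆ Ioi a := Ici_subset_Ioi.mpr hx
  have hconst : IntegrableOn (fun _ => g x) (Ici x) := by
    refine Integrable.mono' (hint.mono_set hsub) aestronglyMeasurable_const ?_
    filter_upwards [ae_restrict_mem measurableSet_Ici] with y hy
    rw [Real.norm_of_nonneg hpos.le]
    exact hg hx (hsub hy) hy
  simp [integrableOn_const_iff, hpos.ne'] at hconst

theorem nonpos_of_antitoneOn_mul_of_integrableOn {φ : ℝ → ℝ}
    (hφ : AntitoneOn (fun x => x * φ x) (Ioi 0)) (hint : IntegrableOn φ (Ioi 0)) :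
    ∀ x ∈ Ioi (0 : ℝ), φ x ≤ 0 := by
  intro x₀ hx₀
  by_contra! hpos
  have hc : 0 < x₀ * φ x₀ := mul_pos hx₀ hpos
  have hinv : IntegrableOn (fun t : ℝ => t⁻¹) (Ioc 0 x₀) := by
    refine Integrable.mono' ((hint.mono_set Ioc_subset_Ioi_self).const_mul (x₀ * φ x₀)⁻¹)
      measurable_inv.aestronglyMeasurable ?_
    filter_upwards [ae_restrict_mem measurableSet_Ioc] with t ht
    have hle : x₀ * φ x₀ ≤ t * φ t := hφ ht.1 hx₀ ht.2
    rw [Real.norm_of_nonneg (inv_nonneg.2 ht.1.le), inv_le_iff_one_le_mul₀ ht.1,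
      mul_assoc, mul_comm (φ t), le_inv_mul_iff₀ hc, mul_one]
    exact hle
  have h0 := (intervalIntegrable_iff_integrableOn_Ioc_of_le (le_of_lt hx₀)).2 hinv
  rw [intervalIntegrable_inv_iff, uIcc_of_le (le_of_lt hx₀)] at h0
  exact h0.elim (ne_of_lt hx₀) fun hmem => hmem (left_mem_Icc.2 (le_of_lt hx₀))

def IsDiracEigenfunction (α : ℝ) (z : ℂ) (f₁ f₂ : ℝ → ℂ) : Prop :=
  ∀ x ∈ Ioi (0 : ℝ), HasDerivAt f₁ (((α / x : ℝ) : ℂ) * f₁ x - z * f₂ x) x ∧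
    HasDerivAt f₂ (z * f₁ x - ((α / x : ℝ) : ℂ) * f₂ x) x

def diracFlux (z : ℂ) (f₁ f₂ : ℝ → ℂ) (x : ℝ) : ℝ := (z * f₁ x * conj (f₂ x)).re

theorem abs_diracFlux_le (z : ℂ) (f₁ f₂ : ℝ → ℂ) (x : ℝ) :
    |diracFlux z f₁ f₂ x| ≤ ‖z‖ * (‖f₁ x‖ ^ 2 + ‖f₂ x‖ ^ 2) := by
  calc |diracFlux z f₁ f₂ x| ≤ ‖z * f₁ x * conj (f₂ x)‖ := Complex.abs_re_le_norm _
    _ = ‖z‖ * (‖f₁ x‖ * ‖f₂ x‖) := by simp [mul_assoc]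
    _ ≤ ‖z‖ * (‖f₁ x‖ ^ 2 + ‖f₂ x‖ ^ 2) := by
      gcongr; nlinarith [sq_nonneg (‖f₁ x‖ - ‖f₂ x‖), norm_nonneg (f₁ x), norm_nonneg (f₂ x)]

namespace IsDiracEigenfunction

variable {α : ℝ} {z : ℂ} {f₁ f₂ : ℝ → ℂ}

theorem swap (h : IsDiracEigenfunction α z f₁ f₂) : IsDiracEigenfunction (-α) (-z) f₂ f₁ := by
  intro x hx
  obtain ⟨h₁, h₂⟩ := h x hx
  refine ⟨h₂.congr_deriv ?_, h₁.congr_deriv ?_⟩ <;> push_cast <;> ring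

theorem continuousOn_fst (h : IsDiracEigenfunction α z f₁ f₂) : ContinuousOn f₁ (Ioi 0) :=
  fun x hx => (h x hx).1.continuousAt.continuousWithinAt

theorem continuousOn_snd (h : IsDiracEigenfunction α z f₁ f₂) : ContinuousOn f₂ (Ioi 0) :=
  h.swap.continuousOn_fst

theorem hasDerivAt_diracFlux (h : IsDiracEigenfunction α z f₁ f₂) (hz : z.re = 0) {x : ℝ}
    (hx : 0 < x) :
    HasDerivAt (diracFlux z f₁ f₂) (‖z‖ ^ 2 * (‖f₁ x‖ ^ 2 + ‖f₂ x‖ ^ 2)) x := by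
  obtain ⟨h₁, h₂⟩ := h x hx
  have hzc : conj z = -z := Complex.ext (by simp [hz]) (by simp)
  have hderiv : z * (((α / x : ℝ) : ℂ) * f₁ x - z * f₂ x) * conj (f₂ x)
      + z * f₁ x * conj (z * f₁ x - ((α / x : ℝ) : ℂ) * f₂ x)
      = ((‖z‖ ^ 2 * (‖f₁ x‖ ^ 2 + ‖f₂ x‖ ^ 2) : ℝ) : ℂ) := by
    simp only [map_sub, map_mul, Complex.conj_ofReal]
    push_cast
    linear_combination (f₁ x * conj (f₁ x) + f₂ x * conj (f₂ x)) * Complex.mul_conj' z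
      + (‖z‖ : ℂ) ^ 2 * (Complex.mul_conj' (f₁ x) + Complex.mul_conj' (f₂ x))
      - z * f₂ x * conj (f₂ x) * hzc
  have hprod := Complex.reCLM.hasFDerivAt.comp_hasDerivAt x ((h₁.const_mul z).mul h₂.star)
  simp only [Complex.star_def, hderiv, Complex.reCLM_apply, Complex.ofReal_re] at hprod
  exact hprod

theorem hasDerivAt_mul_norm_snd_sq (h : IsDiracEigenfunction α z f₁ f₂) {x : ℝ} (hx : 0 < x) :
    HasDerivAt (fun y => y * ‖f₂ y‖ ^ 2)
      ((1 - 2 * α) * ‖f₂ x‖ ^ 2 + 2 * x * diracFlux z f₁ f₂ x) x := by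
  have hprod := (hasDerivAt_id x).mul (h x hx).2.norm_sq
  refine hprod.congr_deriv ?_
  rw [id, Complex.inner, sub_mul, Complex.sub_re, mul_assoc _ (f₂ x), Complex.mul_conj',
    ← Complex.ofReal_pow, Complex.re_ofReal_mul, Complex.ofReal_re, diracFlux]
  field_simp
  ring

theorem monotoneOn_diracFlux (h : IsDiracEigenfunction α z f₁ f₂) (hz : z.re = 0) :
    MonotoneOn (diracFlux z f₁ f₂) (Ioi 0) := by
  refine monotoneOn_of_hasDerivWithinAt_nonneg (convex_Ioi 0)
    (f' := fun x => ‖z‖ ^ 2 * (‖f₁ x‖ ^ 2 + ‖f₂ x‖ ^ 2))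
    (fun x hx => (h.hasDerivAt_diracFlux hz hx).continuousAt.continuousWithinAt)
    (fun x hx => ?_) (fun x _ => by positivity)
  rw [interior_Ioi] at hx ⊢
  exact (h.hasDerivAt_diracFlux hz hx).hasDerivWithinAt

theorem integrableOn_diracFlux (h : IsDiracEigenfunction α z f₁ f₂)
    (hL2 : IntegrableOn (fun x => ‖f₁ x‖ ^ 2 + ‖f₂ x‖ ^ 2) (Ioi 0)) :
    IntegrableOn (diracFlux z f₁ f₂) (Ioi 0) := by
  have hcont : ContinuousOn (diracFlux z f₁ f₂) (Ioi 0) := by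
    have := h.continuousOn_fst
    have := h.continuousOn_snd
    unfold diracFlux
    fun_prop
  refine Integrable.mono' (hL2.const_mul ‖z‖) (hcont.aestronglyMeasurable measurableSet_Ioi) ?_
  exact ae_of_all _ fun x => abs_diracFlux_le z f₁ f₂ x

theorem antitoneOn_mul_norm_snd_sq (h : IsDiracEigenfunction α z f₁ f₂) (hα : 1 / 2 ≤ α)
    (hz : z.re = 0) (hL2 : IntegrableOn (fun x => ‖f₁ x‖ ^ 2 + ‖f₂ x‖ ^ 2) (Ioi 0)) :
    AntitoneOn (fun x => x * ‖f₂ x‖ ^ 2) (Ioi 0) := by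
  have hflux :=
    (h.monotoneOn_diracFlux hz).nonpos_of_integrableOn_Ioi (h.integrableOn_diracFlux hL2)
  refine antitoneOn_of_hasDerivWithinAt_nonpos (convex_Ioi 0)
    (f' := fun x => (1 - 2 * α) * ‖f₂ x‖ ^ 2 + 2 * x * diracFlux z f₁ f₂ x)
    (fun x hx => (h.hasDerivAt_mul_norm_snd_sq hx).continuousAt.continuousWithinAt)
    (fun x hx => ?_) (fun x hx => ?_) <;> rw [interior_Ioi] at hx
  · exact (h.hasDerivAt_mul_norm_snd_sq hx).hasDerivWithinAt
  · have hx_pos : 0 < x := hx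
    nlinarith [hflux x hx, sq_nonneg ‖f₂ x‖]

theorem snd_eq_zero (h : IsDiracEigenfunction α z f₁ f₂) (hα : 1 / 2 ≤ α) (hz : z.re = 0)
    (hL2 : IntegrableOn (fun x => ‖f₁ x‖ ^ 2 + ‖f₂ x‖ ^ 2) (Ioi 0)) :
    ∀ x ∈ Ioi (0 : ℝ), f₂ x = 0 := by
  have hint : IntegrableOn (fun x => ‖f₂ x‖ ^ 2) (Ioi 0) := by
    refine Integrable.mono' hL2
      ((h.continuousOn_snd.norm.pow 2).aestronglyMeasurable measurableSet_Ioi) ?_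
    exact ae_of_all _ fun x => by simp
  intro x hx
  simpa using nonpos_of_antitoneOn_mul_of_integrableOn (h.antitoneOn_mul_norm_snd_sq hα hz hL2)
    hint x hx

theorem fst_eq_zero_of_snd_eq_zero (h : IsDiracEigenfunction α z f₁ f₂) (hz : z ≠ 0)
    (h₂ : ∀ x ∈ Ioi (0 : ℝ), f₂ x = 0) : ∀ x ∈ Ioi (0 : ℝ), f₁ x = 0 := by
  intro x hx
  have hzero : HasDerivAt f₂ 0 x :=
    (hasDerivAt_const x 0).congr_of_eventuallyEq
      (eventually_of_mem (isOpen_Ioi.mem_nhds hx) h₂)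
  have hzf₁ := (h x hx).2.unique hzero
  rw [h₂ x hx, mul_zero, sub_zero] at hzf₁
  exact (mul_eq_zero.1 hzf₁).resolve_left hz

theorem eq_zero (h : IsDiracEigenfunction α z f₁ f₂) (hα : 1 / 2 ≤ |α|) (hz : z.re = 0)
    (hz₀ : z ≠ 0) (hL2 : IntegrableOn (fun x => ‖f₁ x‖ ^ 2 + ‖f₂ x‖ ^ 2) (Ioi 0)) :
    ∀ x ∈ Ioi (0 : ℝ), f₁ x = 0 ∧ f₂ x = 0 := by
  rcases le_abs'.1 hα with hneg | hpos
  · have hL2' : IntegrableOn (fun x => ‖f₂ x‖ ^ 2 + ‖f₁ x‖ ^ 2) (Ioi 0) := by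
      simpa only [add_comm] using hL2
    have h₁ := h.swap.snd_eq_zero (by linarith) (by simp [hz]) hL2'
    exact fun x hx => ⟨h₁ x hx, h.swap.fst_eq_zero_of_snd_eq_zero (neg_ne_zero.2 hz₀) h₁ x hx⟩
  · have h₂ := h.snd_eq_zero hpos hz hL2
    exact fun x hx => ⟨h.fst_eq_zero_of_snd_eq_zero hz₀ h₂ x hx, h₂ x hx⟩

end IsDiracEigenfunction

theorem deficiency_trivial_halfline (α : ℝ) (hα : 1 / 2 ≤ |α|)
    (z : ℂ) (hz : z = Complex.I ∨ z = -Complex.I)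
    (f₁ f₂ : ℝ → ℂ)
    (hf₁ : ContDiffOn ℝ 1 f₁ (Ioi 0)) (hf₂ : ContDiffOn ℝ 1 f₂ (Ioi 0))
    (hL2 : IntegrableOn (fun x => ‖f₁ x‖ ^ 2 + ‖f₂ x‖ ^ 2) (Ioi 0))
    (heq : ∀ x ∈ Ioi (0 : ℝ),
      deriv f₂ x + ((α / x : ℝ) : ℂ) * f₂ x = z * f₁ x
      ∧ -deriv f₁ x + ((α / x : ℝ) : ℂ) * f₁ x = z * f₂ x) :
    ∀ x ∈ Ioi (0 : ℝ), f₁ x = 0 ∧ f₂ x = 0 := by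
  have hsol : IsDiracEigenfunction α z f₁ f₂ := by
    intro x hx
    have hd₁ := ((hf₁.differentiableOn one_ne_zero).differentiableAt
      (isOpen_Ioi.mem_nhds hx)).hasDerivAt
    have hd₂ := ((hf₂.differentiableOn one_ne_zero).differentiableAt
      (isOpen_Ioi.mem_nhds hx)).hasDerivAt
    obtain ⟨e₂, e₁⟩ := heq x hx
    exact ⟨hd₁.congr_deriv (by linear_combination -e₁), hd₂.congr_deriv (by linear_combination e₂)⟩
  have hz_re : z.re = 0 := by rcases hz with rfl | rfl <;> simp
  have hz₀ : z ≠ 0 := by rcases hz with rfl | rfl <;> simp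
  exact hsol.eq_zero hα hz_re hz₀ hL2

end
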